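/- Mean value theorem on homogeneous Lie groups: Let 𝔾 be a homogeneous Lie group with homogeneous norm |·|. There exists β > 0 depending only on 𝔾 such that for each i ∈ {1,…,d} and each y ∈ 𝔾 there is a finite signed measure Q^{e_i}(y,·) on 𝔾, supported in B_{β|y|}(e) and with total variation ∫_𝔾 |Q^{e_i}(y,dz)| ≲ |y|^{𝔰_i} uniformly in y, such that for every f ∈ C^∞(𝔾) and all x, y ∈ 𝔾: f(xy) − f(x) = Σ_{i=1}^d ∫_𝔾 (X_i f)(xz) Q^{e_i}(y,dz). -/

import Mathlib

open Set
noncomputable section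
attribute [local instance] Classical.propDecidable

namespace HomLie

/-- The underlying carrier of a homogeneous Lie group: `ℝ^d`, identified with the Lie
algebra via the exponential map (exponential coordinates of the first kind). -/
abbrev Gc (d : ℕ) := Fin d → ℝ

/-- A homogeneous Lie group structure on `ℝ^d`: a simply connected nilpotent Lie group in
exponential coordinates (polynomial, hence smooth, group law; Haar measure = Lebesgue
measure), with dilations generated by a diagonal map `𝔰` with eigenvalues
`1 = 𝔰₁ ≤ ⋯ ≤ 𝔰_d` (in the coordinates given by the eigenbasis), and a homogeneous
(quasi-)norm. -/
structure HLG (d : ℕ) where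
  mul : Gc d → Gc d → Gc d
  one : Gc d
  inv : Gc d → Gc d
  one_eq_zero : one = fun _ => (0 : ℝ)
  mul_assoc' : ∀ x y z, mul (mul x y) z = mul x (mul y z)
  one_mul' : ∀ x, mul one x = x
  mul_one' : ∀ x, mul x one = x
  inv_mul' : ∀ x, mul (inv x) x = one
  mul_inv' : ∀ x, mul x (inv x) = one
  smooth_mul : ContDiff ℝ (⊤ : ℕ∞) fun p : Gc d × Gc d => mul p.1 p.2
  smooth_inv : ContDiff ℝ (⊤ : ℕ∞) inv
  s : Fin d → ℝ
  s_mono : Monotone s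
  one_le_s : ∀ i, 1 ≤ s i
  s_min : ∀ h : 0 < d, s ⟨0, h⟩ = 1
  dil_mul : ∀ r : ℝ, 0 < r → ∀ x y,
    (fun i => r ^ s i * mul x y i) = mul (fun i => r ^ s i * x i) (fun i => r ^ s i * y i)
  hnorm : Gc d → ℝ
  hnorm_nonneg : ∀ x, 0 ≤ hnorm x
  hnorm_cont : Continuous hnorm
  hnorm_eq_zero : ∀ x, hnorm x = 0 ↔ x = one
  hnorm_inv : ∀ x, hnorm (inv x) = hnorm x
  hnorm_dil : ∀ r : ℝ, 0 < r → ∀ x, hnorm (fun i => r ^ s i * x i) = r * hnorm x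
  mu : ℝ
  one_le_mu : 1 ≤ mu
  hnorm_mul_le : ∀ x y, hnorm (mul x y) ≤ mu * (hnorm x + hnorm y)

namespace HLG

variable {d : ℕ}

/-- The dilation `x ↦ r · x`. -/
def dil (Γ : HLG d) (r : ℝ) (x : Gc d) : Gc d := fun i => r ^ Γ.s i * x i

/-- The left-invariant (semi-)distance `d(x,y) = |x⁻¹ y|`. -/
def gdist (Γ : HLG d) (x y : Gc d) : ℝ := Γ.hnorm (Γ.mul (Γ.inv x) y)

/-- The ball `B_r(x)` for the homogeneous norm. -/
def ball (Γ : HLG d) (x : Gc d) (r : ℝ) : Set (Gc d) := {y | Γ.gdist x y < r}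

/-- Homogeneous dimension `|𝔰| = 𝔰₁ + ⋯ + 𝔰_d`. -/
def sdim (Γ : HLG d) : ℝ := ∑ i, Γ.s i

/-- The left-invariant vector field `X_i f (y) = ∂_t f(y · exp(t X_i))|_{t=0}`. In
exponential coordinates `exp (t X_i) = Pi.single i t`. -/
def X (Γ : HLG d) (i : Fin d) (f : Gc d → ℝ) (y : Gc d) : ℝ :=
  deriv (fun t : ℝ => f (Γ.mul y (Pi.single i t))) 0

/-- The right-invariant vector field `Y_i f (y) = ∂_t f(exp(t X_i) · y)|_{t=0}`. -/
def Yr (Γ : HLG d) (i : Fin d) (f : Gc d → ℝ) (y : Gc d) : ℝ :=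
  deriv (fun t : ℝ => f (Γ.mul (Pi.single i t) y)) 0

/-- Iterated left-invariant derivative `X^I = X₁^{i₁} ⋯ X_d^{i_d}` (in this order). -/
def XI (Γ : HLG d) (I : Fin d → ℕ) (f : Gc d → ℝ) : Gc d → ℝ :=
  (((List.finRange d).map fun j => (Γ.X j)^[I j]).foldr (fun g h => g ∘ h) id) f

/-- Iterated left-invariant derivative in reversed order `X_d^{i_d} ⋯ X₁^{i₁}`. -/
def XIrev (Γ : HLG d) (I : Fin d → ℕ) (f : Gc d → ℝ) : Gc d → ℝ :=
  (((List.finRange d).map fun j => (Γ.X j)^[I j]).foldl (fun h g => g ∘ h) id) f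

/-- Homogeneous degree `d(I) = Σ_j 𝔰_j i_j` of a multi-index. -/
def dI (Γ : HLG d) (I : Fin d → ℕ) : ℝ := ∑ j, Γ.s j * (I j : ℝ)

/-- Isotropic degree `|I| = Σ_j i_j` of a multi-index. -/
def absI {d : ℕ} (I : Fin d → ℕ) : ℕ := ∑ j, I j

/-- Monomial `η^I(x) = Π_j η_j(x)^{i_j}`; in exponential coordinates `η_j(x) = x j`. -/
def etaI {d : ℕ} (I : Fin d → ℕ) (x : Gc d) : ℝ := ∏ j, x j ^ I j

/-- The (finite) set of multi-indices `I` with `|I| ≤ n`. -/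
def multiIdxLe (d n : ℕ) : Finset (Fin d → ℕ) :=
  ((Finset.univ : Finset (Fin d → Fin (n + 1))).image fun g j => (g j : ℕ)).filter
    fun I => ∑ j, I j ≤ n

/-- The polynomial with (finitely supported) coefficients `c`. -/
def polyFun {d : ℕ} (c : (Fin d → ℕ) →₀ ℝ) : Gc d → ℝ := fun z => c.sum fun I a => a * etaI I z

/-- `P` is a polynomial of homogeneous degree `< a`. -/
def IsPolyBelow (Γ : HLG d) (a : ℝ) (P : Gc d → ℝ) : Prop :=
  ∃ c : (Fin d → ℕ) →₀ ℝ, (∀ I ∈ c.support, Γ.dI I < a) ∧ P = polyFun c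

/-- `P` is the left Taylor polynomial of homogeneous degree (less than) `a` of `f` at `x`:
the unique `P ∈ 𝒫_a` with `X^I P(e) = X^I f(x)` for all `d(I) < a`. -/
def IsTaylorAt (Γ : HLG d) (a : ℝ) (f : Gc d → ℝ) (x : Gc d) (P : Gc d → ℝ) : Prop :=
  IsPolyBelow Γ a P ∧ ∀ I : Fin d → ℕ, Γ.dI I < a → Γ.XI I P Γ.one = Γ.XI I f x

/-- Test functions: smooth and compactly supported. -/
def IsTest {d : ℕ} (φ : Gc d → ℝ) : Prop := ContDiff ℝ (⊤ : ℕ∞) φ ∧ HasCompactSupport φ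

/-- The class `𝔅_r` of test functions supported in `B₁(e)` with `|X^I φ| ≤ 1` for
`d(I) ≤ r`. -/
def testClass (Γ : HLG d) (r : ℝ) : Set (Gc d → ℝ) :=
  {φ | ContDiff ℝ (⊤ : ℕ∞) φ ∧ (∀ z, φ z ≠ 0 → Γ.hnorm z < 1) ∧
    ∀ I : Fin d → ℕ, Γ.dI I ≤ r → ∀ z, |Γ.XI I φ z| ≤ 1}

/-- The rescaled and recentred test function `φ^λ_x(z) = λ^{-|𝔰|} φ(λ⁻¹ · (x⁻¹ z))`. -/
def scaleTest (Γ : HLG d) (φ : Gc d → ℝ) (lam : ℝ) (x : Gc d) : Gc d → ℝ :=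
  fun z => lam ^ (-Γ.sdim) * φ (Γ.dil lam⁻¹ (Γ.mul (Γ.inv x) z))

/-- Group convolution `(ψ * φ)(x) = ∫ ψ(y) φ(y⁻¹ x) dy` (Haar = Lebesgue measure). -/
def conv (Γ : HLG d) (ψ φ : Gc d → ℝ) : Gc d → ℝ :=
  fun x => ∫ y, ψ y * φ (Γ.mul (Γ.inv y) x)

/-- The distribution pairing of a locally integrable function. -/
def pairFun {d : ℕ} (f : Gc d → ℝ) : (Gc d → ℝ) → ℝ := fun φ => ∫ z, f z * φ z

/-- The `1`-fattening of a set. -/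
def fatten (Γ : HLG d) (K : Set (Gc d)) : Set (Gc d) := {z | ∃ y ∈ K, Γ.gdist y z ≤ 1}

end HLG

end HomLie

namespace HomLie
namespace HLG
open MeasureTheory

variable {d : ℕ}

/-- scalar component `t ↦ t * |t|^(a-1)`, equals `t^a` for `t > 0`. -/
def pfun (a t : ℝ) : ℝ := t * |t| ^ (a - 1)

lemma pfun_zero (a : ℝ) : pfun a 0 = 0 := by simp [pfun]

lemma pfun_one (a : ℝ) : pfun a 1 = 1 := by simp [pfun]

lemma pfun_pos {t : ℝ} (ht : 0 < t) (a : ℝ) : pfun a t = t ^ a := by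
  rw [pfun, abs_of_pos ht, show t ^ a = t ^ (a - 1 + 1) by ring_nf,
    Real.rpow_add ht, Real.rpow_one]
  ring

lemma hasDerivAt_pfun {a : ℝ} (ha : 1 ≤ a) (t : ℝ) :
    HasDerivAt (pfun a) (a * |t| ^ (a - 1)) t := by
  rcases lt_trichotomy t 0 with ht | rfl | ht
  · -- t < 0 : pfun a u = -((-u)^a) near t
    have hne : -t ≠ 0 := neg_ne_zero.2 ht.ne
    have h1 : HasDerivAt (fun v : ℝ => v ^ a) (a * (-t) ^ (a - 1)) (-t) :=
      Real.hasDerivAt_rpow_const (Or.inl hne)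
    have h2 : HasDerivAt (fun u : ℝ => -u) (-1 : ℝ) t := (hasDerivAt_id t).neg
    have h3 : HasDerivAt (fun u : ℝ => -((-u) ^ a)) (a * (-t) ^ (a - 1)) t := by
      have := (h1.comp t h2).neg
      refine this.congr_deriv ?_
      ring
    have heq : pfun a =ᶠ[nhds t] fun u : ℝ => -((-u) ^ a) := by
      filter_upwards [IsOpen.mem_nhds isOpen_Iio ht] with u hu
      have hu' : (0:ℝ) < -u := by simpa using hu
      rw [pfun, abs_of_neg hu]
      rw [show (-u) ^ a = (-u) ^ (a - 1 + 1) by ring_nf]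
      rw [Real.rpow_add hu', Real.rpow_one]
      ring
    have := h3.congr_of_eventuallyEq heq
    rwa [abs_of_neg ht]
  · -- t = 0
    rcases eq_or_lt_of_le ha with rfl | ha'
    · have : pfun 1 = fun u : ℝ => u := by
        funext u; simp [pfun]
      rw [this]
      simpa using (hasDerivAt_id' (0:ℝ))
    · have hz : |(0:ℝ)| ^ (a - 1) = 0 := by
        rw [abs_zero, Real.zero_rpow (by linarith)]
      rw [hz, mul_zero]
      rw [hasDerivAt_iff_tendsto_slope]
      have hs : slope (pfun a) 0 =ᶠ[nhdsWithin 0 {(0:ℝ)}ᶜ] fun u => |u| ^ (a - 1) := by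
        filter_upwards [self_mem_nhdsWithin] with u hu
        have hu : u ≠ 0 := hu
        rw [slope_def_field, pfun, pfun_zero]
        field_simp
        ring
      rw [Filter.tendsto_congr' hs]
      have hc : ContinuousAt (fun u : ℝ => |u| ^ (a - 1)) 0 :=
        (Real.continuousAt_rpow_const _ _ (Or.inr (by linarith))).comp
          continuous_abs.continuousAt
      have := hc.continuousWithinAt (s := {(0:ℝ)}ᶜ)
      rw [ContinuousWithinAt] at this
      simpa [hz, Real.zero_rpow (show a - 1 ≠ 0 by linarith)] using this
  · -- t > 0
    have hne : t ≠ 0 := ne_of_gt ht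
    have h1 : HasDerivAt (fun v : ℝ => v ^ a) (a * t ^ (a - 1)) t :=
      Real.hasDerivAt_rpow_const (Or.inl hne)
    have heq : pfun a =ᶠ[nhds t] fun v : ℝ => v ^ a := by
      filter_upwards [IsOpen.mem_nhds isOpen_Ioi ht] with u hu
      have hu' : (0:ℝ) < u := hu
      rw [pfun, abs_of_pos hu']
      rw [show u ^ a = u ^ (a - 1 + 1) by ring_nf]
      rw [Real.rpow_add hu', Real.rpow_one]
      ring
    have := h1.congr_of_eventuallyEq heq
    rwa [abs_of_pos ht]

lemma continuous_absrpow {a : ℝ} (ha : 1 ≤ a) : Continuous fun t : ℝ => |t| ^ (a - 1) := by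
  rw [continuous_iff_continuousAt]
  intro t
  exact (Real.continuousAt_rpow_const _ _ (Or.inr (by linarith))).comp
    continuous_abs.continuousAt

lemma continuous_pfun {a : ℝ} (ha : 1 ≤ a) : Continuous (pfun a) :=
  continuous_id.mul (continuous_absrpow ha)

variable (Γ : HLG d)

/-- The curve `t ↦ δ_t y` (extended oddly to `t < 0`). -/
def Acur (y : Gc d) (t : ℝ) : Gc d := fun i => pfun (Γ.s i) t * y i

/-- Its derivative. -/
def Acur' (y : Gc d) (t : ℝ) : Gc d := fun i => Γ.s i * |t| ^ (Γ.s i - 1) * y i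

lemma Acur_zero (y : Gc d) : Γ.Acur y 0 = Γ.one := by
  funext i; simp [Acur, pfun_zero, Γ.one_eq_zero]

lemma Acur_one (y : Gc d) : Γ.Acur y 1 = y := by
  funext i; simp [Acur, pfun_one]

lemma hasDerivAt_Acur (y : Gc d) (t : ℝ) : HasDerivAt (Γ.Acur y) (Γ.Acur' y t) t := by
  rw [hasDerivAt_pi]
  intro i
  exact (hasDerivAt_pfun (Γ.one_le_s i) t).mul_const (y i)

lemma continuous_Acur : Continuous fun p : Gc d × ℝ => Γ.Acur p.1 p.2 := by
  apply continuous_pi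
  intro i
  exact ((continuous_pfun (Γ.one_le_s i)).comp continuous_snd).mul
    ((continuous_apply i).comp continuous_fst)

lemma continuous_Acur' : Continuous fun p : Gc d × ℝ => Γ.Acur' p.1 p.2 := by
  apply continuous_pi
  intro i
  exact (continuous_const.mul
    ((continuous_absrpow (Γ.one_le_s i)).comp continuous_snd)).mul
    ((continuous_apply i).comp continuous_fst)

/-- multiplication as a map on the product. -/
def mulF : Gc d × Gc d → Gc d := fun p => Γ.mul p.1 p.2

lemma smooth_mulF : ContDiff ℝ (⊤ : ℕ∞) Γ.mulF := Γ.smooth_mul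

/-- The integrand vector field `W y t = d/du |_{u=t} (A(t)⁻¹ A(u))`. -/
def Wv (y : Gc d) (t : ℝ) : Gc d :=
  fderiv ℝ Γ.mulF (Γ.inv (Γ.Acur y t), Γ.Acur y t) (0, Γ.Acur' y t)

lemma hasDerivAt_h (y : Gc d) (t : ℝ) :
    HasDerivAt (fun u => Γ.mul (Γ.inv (Γ.Acur y t)) (Γ.Acur y u)) (Γ.Wv y t) t := by
  have hc : HasDerivAt (fun u => ((Γ.inv (Γ.Acur y t), Γ.Acur y u) : Gc d × Gc d))
      ((0 : Gc d), Γ.Acur' y t) t :=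
    (hasDerivAt_const t _).prodMk (Γ.hasDerivAt_Acur y t)
  have hm : HasFDerivAt Γ.mulF
      (fderiv ℝ Γ.mulF (Γ.inv (Γ.Acur y t), Γ.Acur y t))
      (Γ.inv (Γ.Acur y t), Γ.Acur y t) :=
    (Γ.smooth_mulF.differentiable (by simp) _).hasFDerivAt
  exact hm.comp_hasDerivAt t hc

lemma continuous_Wv : Continuous fun p : Gc d × ℝ => Γ.Wv p.1 p.2 := by
  have h1 : Continuous fun p : Gc d × ℝ =>
      fderiv ℝ Γ.mulF (Γ.inv (Γ.Acur p.1 p.2), Γ.Acur p.1 p.2) :=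
    (Γ.smooth_mulF.continuous_fderiv (by simp)).comp
      ((Γ.smooth_inv.continuous.comp Γ.continuous_Acur).prodMk Γ.continuous_Acur)
  have h2 : Continuous fun p : Gc d × ℝ => (((0 : Gc d), Γ.Acur' p.1 p.2) : Gc d × Gc d) :=
    continuous_const.prodMk Γ.continuous_Acur'
  exact h1.clm_apply h2

lemma smooth_left (f : Gc d → ℝ) (hf : ContDiff ℝ (⊤ : ℕ∞) f) (w : Gc d) :
    ContDiff ℝ (⊤ : ℕ∞) fun z => f (Γ.mul w z) :=
  hf.comp (Γ.smooth_mul.comp (contDiff_const.prodMk contDiff_id))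

/-- The differential at the identity of the left translate of `f`. -/
def lder (f : Gc d → ℝ) (w : Gc d) : Gc d →L[ℝ] ℝ :=
  fderiv ℝ (fun z => f (Γ.mul w z)) 0

lemma hasFDerivAt_lder (f : Gc d → ℝ) (hf : ContDiff ℝ (⊤ : ℕ∞) f) (w : Gc d) :
    HasFDerivAt (fun z => f (Γ.mul w z)) (Γ.lder f w) 0 :=
  ((Γ.smooth_left f hf w).differentiable (by simp) 0).hasFDerivAt

/-- The `i`-th coordinate vector. -/
def esingle (i : Fin d) : Gc d := Pi.single i (1:ℝ)

lemma single_eq_smul' (i : Fin d) (t : ℝ) : (Pi.single i t : Gc d) = t • esingle i := by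
  rw [esingle, ← Pi.single_smul, smul_eq_mul, mul_one]

lemma hasDerivAt_smul_single' (c : Gc d) :
    HasDerivAt (fun t : ℝ => t • c) c 0 := by
  simpa using (hasDerivAt_id (0:ℝ)).smul_const c

lemma X_eq (f : Gc d → ℝ) (hf : ContDiff ℝ (⊤ : ℕ∞) f) (i : Fin d) (w : Gc d) :
    Γ.X i f w = Γ.lder f w (esingle i) := by
  have hd : HasDerivAt ((fun z => f (Γ.mul w z)) ∘ fun t : ℝ => t • esingle (d := d) i)
      (Γ.lder f w (esingle i)) 0 :=
    HasFDerivAt.comp_hasDerivAt 0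
      (by
        show HasFDerivAt _ _ ((0:ℝ) • esingle (d := d) i)
        rw [zero_smul]
        exact Γ.hasFDerivAt_lder f hf w)
      (hasDerivAt_smul_single' _)
  have hfun : (fun t : ℝ => f (Γ.mul w (Pi.single i t))) =
      (fun z => f (Γ.mul w z)) ∘ fun t : ℝ => t • esingle (d := d) i := by
    funext t
    simp only [Function.comp]
    rw [← single_eq_smul']
  rw [X, hfun, hd.deriv]

lemma lder_apply (f : Gc d → ℝ) (hf : ContDiff ℝ (⊤ : ℕ∞) f) (w : Gc d) (v : Gc d) :
    Γ.lder f w v = ∑ i, v i * Γ.X i f w := by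
  have hv : v = ∑ i, v i • esingle (d := d) i := by
    rw [show (fun i => v i • esingle (d := d) i) = fun i => (Pi.single i (v i) : Gc d) by
      funext i; rw [single_eq_smul']]
    exact (Finset.univ_sum_single v).symm
  conv_lhs => rw [hv]
  rw [map_sum]
  congr 1
  funext i
  rw [ContinuousLinearMap.map_smul, smul_eq_mul, Γ.X_eq f hf i w]

lemma continuous_X (f : Gc d → ℝ) (hf : ContDiff ℝ (⊤ : ℕ∞) f) (i : Fin d) :
    Continuous (Γ.X i f) := by
  have hF : ContDiff ℝ (⊤ : ℕ∞) fun p : Gc d × Gc d => f (Γ.mul p.1 p.2) := hf.comp Γ.smooth_mul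
  have key : ∀ w, Γ.X i f w =
      fderiv ℝ (fun p : Gc d × Gc d => f (Γ.mul p.1 p.2)) (w, 0)
        ((0 : Gc d), esingle i) := by
    intro w
    have hc : HasDerivAt (fun t : ℝ => ((w, t • esingle (d := d) i) : Gc d × Gc d))
        ((0 : Gc d), esingle i) 0 :=
      (hasDerivAt_const 0 _).prodMk (hasDerivAt_smul_single' _)
    have hd : HasDerivAt ((fun p : Gc d × Gc d => f (Γ.mul p.1 p.2)) ∘
        fun t : ℝ => ((w, t • esingle (d := d) i) : Gc d × Gc d))
        (fderiv ℝ (fun p : Gc d × Gc d => f (Γ.mul p.1 p.2)) (w, 0)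
          ((0 : Gc d), esingle i)) 0 :=
      HasFDerivAt.comp_hasDerivAt 0
        (by
          show HasFDerivAt _ _ ((w, (0:ℝ) • esingle (d := d) i) : Gc d × Gc d)
          rw [zero_smul]
          exact (hF.differentiable (by simp) _).hasFDerivAt)
        hc
    have hfun : (fun t : ℝ => f (Γ.mul w (Pi.single i t))) =
        (fun p : Gc d × Gc d => f (Γ.mul p.1 p.2)) ∘
          fun t : ℝ => ((w, t • esingle (d := d) i) : Gc d × Gc d) := by
      funext t
      simp only [Function.comp]
      rw [← single_eq_smul']
    rw [X, hfun, hd.deriv]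
  rw [show Γ.X i f = fun w => fderiv ℝ (fun p : Gc d × Gc d => f (Γ.mul p.1 p.2)) (w, 0)
      ((0 : Gc d), esingle i) from funext key]
  exact ((hF.continuous_fderiv (by simp)).comp
    (continuous_id.prodMk continuous_const)).clm_apply continuous_const

/-- Derivative of `u ↦ f(x · A(u))`. -/
lemma hasDerivAt_main (f : Gc d → ℝ) (hf : ContDiff ℝ (⊤ : ℕ∞) f) (x y : Gc d) (t : ℝ) :
    HasDerivAt (fun u => f (Γ.mul x (Γ.Acur y u)))
      (∑ i, Γ.Wv y t i * Γ.X i f (Γ.mul x (Γ.Acur y t))) t := by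
  set w := Γ.mul x (Γ.Acur y t) with hw
  have hfun : (fun u => f (Γ.mul x (Γ.Acur y u))) =
      (fun z => f (Γ.mul w z)) ∘ fun u => Γ.mul (Γ.inv (Γ.Acur y t)) (Γ.Acur y u) := by
    funext u
    simp only [Function.comp, hw]
    rw [Γ.mul_assoc', ← Γ.mul_assoc' (Γ.Acur y t), Γ.mul_inv', Γ.one_mul']
  have hpt : Γ.mul (Γ.inv (Γ.Acur y t)) (Γ.Acur y t) = (0 : Gc d) := by
    rw [Γ.inv_mul', Γ.one_eq_zero]; rfl
  have hl : HasFDerivAt (fun z => f (Γ.mul w z)) (Γ.lder f w)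
      ((fun u => Γ.mul (Γ.inv (Γ.Acur y t)) (Γ.Acur y u)) t) := by
    show HasFDerivAt _ _ (Γ.mul (Γ.inv (Γ.Acur y t)) (Γ.Acur y t))
    rw [hpt]
    exact Γ.hasFDerivAt_lder f hf w
  have := hl.comp_hasDerivAt t (Γ.hasDerivAt_h y t)
  rw [← hfun] at this
  rwa [Γ.lder_apply f hf w (Γ.Wv y t)] at this

lemma dil_one (r : ℝ) : (fun i => r ^ Γ.s i * Γ.one i) = Γ.one := by
  funext i; rw [Γ.one_eq_zero]; simp

lemma inv_dil {r : ℝ} (hr : 0 < r) (x : Gc d) :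
    Γ.inv (fun i => r ^ Γ.s i * x i) = fun i => r ^ Γ.s i * Γ.inv x i := by
  have h1 : Γ.mul (fun i => r ^ Γ.s i * x i) (fun i => r ^ Γ.s i * Γ.inv x i) = Γ.one := by
    rw [← Γ.dil_mul r hr x (Γ.inv x), Γ.mul_inv', Γ.dil_one]
  calc Γ.inv (fun i => r ^ Γ.s i * x i)
      = Γ.mul (Γ.inv (fun i => r ^ Γ.s i * x i)) Γ.one := (Γ.mul_one' _).symm
    _ = Γ.mul (Γ.inv (fun i => r ^ Γ.s i * x i))
        (Γ.mul (fun i => r ^ Γ.s i * x i) (fun i => r ^ Γ.s i * Γ.inv x i)) := by rw [h1]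
    _ = Γ.mul (Γ.mul (Γ.inv (fun i => r ^ Γ.s i * x i)) (fun i => r ^ Γ.s i * x i))
        (fun i => r ^ Γ.s i * Γ.inv x i) := (Γ.mul_assoc' _ _ _).symm
    _ = fun i => r ^ Γ.s i * Γ.inv x i := by rw [Γ.inv_mul', Γ.one_mul']

lemma Acur_dil (r : ℝ) (y : Gc d) (t : ℝ) :
    Γ.Acur (fun i => r ^ Γ.s i * y i) t = fun i => r ^ Γ.s i * Γ.Acur y t i := by
  funext i; simp only [Acur]; ring

lemma Wv_dil {r : ℝ} (hr : 0 < r) (y : Gc d) (t : ℝ) :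
    Γ.Wv (fun i => r ^ Γ.s i * y i) t = fun i => r ^ Γ.s i * Γ.Wv y t i := by
  have hcomp : (fun u => Γ.mul (Γ.inv (Γ.Acur (fun i => r ^ Γ.s i * y i) t))
      (Γ.Acur (fun i => r ^ Γ.s i * y i) u)) =
      fun u => (fun i => r ^ Γ.s i *
        Γ.mul (Γ.inv (Γ.Acur y t)) (Γ.Acur y u) i : Gc d) := by
    funext u
    rw [Γ.Acur_dil r y t, Γ.Acur_dil r y u, Γ.inv_dil hr, Γ.dil_mul r hr]
  have h1 : HasDerivAt (fun u => Γ.mul (Γ.inv (Γ.Acur (fun i => r ^ Γ.s i * y i) t))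
      (Γ.Acur (fun i => r ^ Γ.s i * y i) u))
      (fun i => r ^ Γ.s i * Γ.Wv y t i : Gc d) t := by
    rw [hcomp, hasDerivAt_pi]
    intro i
    exact ((hasDerivAt_pi.mp (Γ.hasDerivAt_h y t)) i).const_mul _
  exact (Γ.hasDerivAt_h (fun i => r ^ Γ.s i * y i) t).unique h1

lemma hnorm_one : Γ.hnorm Γ.one = 0 := (Γ.hnorm_eq_zero Γ.one).2 rfl

lemma hnorm_Acur_le (y : Gc d) {t : ℝ} (ht : t ∈ Icc (0:ℝ) 1) :
    Γ.hnorm (Γ.Acur y t) ≤ Γ.hnorm y := by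
  rcases eq_or_lt_of_le ht.1 with rfl | htpos
  · rw [Γ.Acur_zero, Γ.hnorm_one]
    exact Γ.hnorm_nonneg y
  · have hA : Γ.Acur y t = fun i => t ^ Γ.s i * y i := by
      funext i; rw [Acur, pfun_pos htpos]
    rw [hA, Γ.hnorm_dil t htpos]
    calc t * Γ.hnorm y ≤ 1 * Γ.hnorm y :=
          mul_le_mul_of_nonneg_right ht.2 (Γ.hnorm_nonneg y)
      _ = Γ.hnorm y := one_mul _

lemma Wv_zero (t : ℝ) : Γ.Wv (0 : Gc d) t = 0 := by
  have hA : ∀ u, Γ.Acur (0 : Gc d) u = 0 := by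
    intro u; funext i; simp [Acur]
  have hA' : Γ.Acur' (0 : Gc d) t = 0 := by
    funext i; simp [Acur']
  rw [Wv, hA', hA]
  have : (((0 : Gc d), (0 : Gc d)) : Gc d × Gc d) = 0 := rfl
  rw [this, map_zero]

lemma exists_sphere_decomp {y : Gc d} (hy : y ≠ 0) :
    ∃ r : ℝ, 0 < r ∧ ‖(fun i => r ^ Γ.s i * y i : Gc d)‖ = 1 := by
  have hny : 0 < ‖y‖ := norm_pos_iff.2 hy
  set φ : ℝ → ℝ := fun r => ‖(fun i => r ^ Γ.s i * y i : Gc d)‖ with hφ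
  set a : ℝ := min 1 (1 / (‖y‖ + 1)) with ha
  set b : ℝ := max 1 (2 / ‖y‖) with hb
  have ha0 : 0 < a := lt_min one_pos (by positivity)
  have ha1 : a ≤ 1 := min_le_left _ _
  have hb1 : (1:ℝ) ≤ b := le_max_left _ _
  have hab : a ≤ b := ha1.trans hb1
  have hφc : ContinuousOn φ (Icc a b) := by
    apply ContinuousOn.norm
    apply continuousOn_pi.2
    intro i
    apply ContinuousOn.mul _ continuousOn_const
    intro r hr
    exact ((Real.continuousAt_rpow_const r (Γ.s i)
      (Or.inl (ne_of_gt (lt_of_lt_of_le ha0 hr.1))))).continuousWithinAt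
  have hφa : φ a ≤ 1 := by
    rw [hφ]
    rw [pi_norm_le_iff_of_nonneg zero_le_one]
    intro i
    have h1 : a ^ Γ.s i ≤ a := by
      calc a ^ Γ.s i ≤ a ^ (1:ℝ) :=
            Real.rpow_le_rpow_of_exponent_ge ha0 ha1 (Γ.one_le_s i)
        _ = a := Real.rpow_one a
    have h2 : |y i| ≤ ‖y‖ := norm_le_pi_norm y i
    calc ‖a ^ Γ.s i * y i‖ = a ^ Γ.s i * |y i| := by
          rw [Real.norm_eq_abs, abs_mul, abs_of_pos (Real.rpow_pos_of_pos ha0 _)]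
      _ ≤ a * ‖y‖ := mul_le_mul h1 h2 (abs_nonneg _) (le_of_lt ha0)
      _ ≤ (1 / (‖y‖ + 1)) * ‖y‖ :=
          mul_le_mul_of_nonneg_right (min_le_right _ _) (norm_nonneg _)
      _ ≤ 1 := by
          rw [div_mul_eq_mul_div, one_mul, div_le_one (by positivity)]
          linarith
  have hφb : 1 ≤ φ b := by
    have hb0 : 0 < b := lt_of_lt_of_le one_pos hb1
    have hφb0 : 0 ≤ φ b := norm_nonneg _
    have key : ∀ i, b * |y i| ≤ φ b := by
      intro i
      have h1 : b ≤ b ^ Γ.s i := by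
        calc b = b ^ (1:ℝ) := (Real.rpow_one b).symm
          _ ≤ b ^ Γ.s i := Real.rpow_le_rpow_of_exponent_le hb1 (Γ.one_le_s i)
      calc b * |y i| ≤ b ^ Γ.s i * |y i| :=
            mul_le_mul_of_nonneg_right h1 (abs_nonneg _)
        _ = ‖b ^ Γ.s i * y i‖ := by
            rw [Real.norm_eq_abs, abs_mul, abs_of_pos (Real.rpow_pos_of_pos hb0 _)]
        _ ≤ φ b := norm_le_pi_norm (fun i => b ^ Γ.s i * y i : Gc d) i
    have hyb : ‖y‖ ≤ φ b / b := by
      rw [pi_norm_le_iff_of_nonneg (by positivity)]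
      intro i
      rw [Real.norm_eq_abs, le_div_iff₀ hb0, mul_comm]
      exact key i
    have h2 : 2 ≤ b * ‖y‖ := by
      have : 2 / ‖y‖ ≤ b := le_max_right _ _
      calc (2:ℝ) = (2 / ‖y‖) * ‖y‖ := by field_simp
        _ ≤ b * ‖y‖ := mul_le_mul_of_nonneg_right this (norm_nonneg _)
    have h3 : b * ‖y‖ ≤ φ b := by
      calc b * ‖y‖ ≤ b * (φ b / b) := mul_le_mul_of_nonneg_left hyb (le_of_lt hb0)
        _ = φ b := by field_simp
    linarith
  have h1mem : (1:ℝ) ∈ Icc (φ a) (φ b) := ⟨hφa, hφb⟩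
  obtain ⟨r, hrmem, hr1⟩ := intermediate_value_Icc hab hφc h1mem
  exact ⟨r, lt_of_lt_of_le ha0 hrmem.1, hr1⟩

lemma exists_bound :
    ∃ C : Fin d → ℝ, (∀ i, 0 ≤ C i) ∧
      ∀ i (y : Gc d), ∀ t ∈ Icc (0:ℝ) 1, |Γ.Wv y t i| ≤ C i * Γ.hnorm y ^ Γ.s i := by
  rcases Nat.eq_zero_or_pos d with rfl | hd
  · exact ⟨fun i => 0, fun i => le_refl _, fun i => i.elim0⟩
  haveI : Nonempty (Fin d) := ⟨⟨0, hd⟩⟩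
  haveI : Nontrivial (Gc d) := by
    apply Function.nontrivial
  obtain ⟨u₀, hu₀⟩ := exists_norm_eq (Gc d) (zero_le_one)
  have hu₀s : u₀ ∈ Metric.sphere (0 : Gc d) 1 := mem_sphere_zero_iff_norm.2 hu₀
  -- minimum of hnorm on the sphere
  obtain ⟨um, hums, hum⟩ := (isCompact_sphere (0 : Gc d) 1).exists_isMinOn ⟨u₀, hu₀s⟩
    Γ.hnorm_cont.continuousOn
  set m : ℝ := Γ.hnorm um with hm
  have hm0 : 0 < m := by
    rcases eq_or_lt_of_le (Γ.hnorm_nonneg um) with h | h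
    · exfalso
      have : um = Γ.one := (Γ.hnorm_eq_zero um).1 h.symm
      have h1 : ‖um‖ = 1 := mem_sphere_zero_iff_norm.1 hums
      rw [this, Γ.one_eq_zero] at h1
      have : ‖(0 : Gc d)‖ = 0 := norm_zero
      rw [show (fun _ : Fin d => (0:ℝ)) = (0 : Gc d) from rfl] at h1
      rw [this] at h1
      exact zero_ne_one h1
    · exact h
  -- maximum of each |Wv| component on sphere × Icc
  have hSc : IsCompact ((Metric.sphere (0 : Gc d) 1) ×ˢ Icc (0:ℝ) 1) :=
    (isCompact_sphere _ _).prod isCompact_Icc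
  have hSne : ((Metric.sphere (0 : Gc d) 1) ×ˢ Icc (0:ℝ) 1).Nonempty :=
    ⟨(u₀, 0), hu₀s, by simp⟩
  have hKex : ∀ i : Fin d, ∃ K : ℝ, 0 ≤ K ∧
      ∀ u ∈ Metric.sphere (0 : Gc d) 1, ∀ t ∈ Icc (0:ℝ) 1, |Γ.Wv u t i| ≤ K := by
    intro i
    obtain ⟨p, hps, hp⟩ := hSc.exists_isMaxOn hSne
      (f := fun p : Gc d × ℝ => |Γ.Wv p.1 p.2 i|)
      (((continuous_apply i).comp Γ.continuous_Wv).abs.continuousOn)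
    refine ⟨|Γ.Wv p.1 p.2 i|, abs_nonneg _, ?_⟩
    intro u hu t ht
    exact hp (Set.mk_mem_prod hu ht)
  choose K hK0 hKle using hKex
  refine ⟨fun i => K i / m ^ Γ.s i, fun i => div_nonneg (hK0 i)
    (le_of_lt (Real.rpow_pos_of_pos hm0 _)), ?_⟩
  intro i y t ht
  by_cases hy : y = 0
  · rw [hy, Γ.Wv_zero]
    have : Γ.hnorm (0 : Gc d) = 0 := by
      rw [show (0 : Gc d) = Γ.one by rw [Γ.one_eq_zero]; rfl, Γ.hnorm_one]
    rw [this, Real.zero_rpow (by have := Γ.one_le_s i; intro h; rw [h] at this; linarith)]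
    simp
  · obtain ⟨r, hr0, hru⟩ := Γ.exists_sphere_decomp hy
    set u : Gc d := fun i => r ^ Γ.s i * y i with hu
    have hus : u ∈ Metric.sphere (0 : Gc d) 1 := mem_sphere_zero_iff_norm.2 hru
    have hyu : y = fun j => (r⁻¹) ^ Γ.s j * u j := by
      funext j
      rw [hu]
      rw [← mul_assoc, ← Real.mul_rpow (inv_nonneg.2 (le_of_lt hr0)) (le_of_lt hr0),
        inv_mul_cancel₀ (ne_of_gt hr0), Real.one_rpow, one_mul]
    have hWy : Γ.Wv y t = fun j => (r⁻¹) ^ Γ.s j * Γ.Wv u t j := by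
      conv_lhs => rw [hyu]
      exact Γ.Wv_dil (inv_pos.2 hr0) u t
    have hWyi : |Γ.Wv y t i| = (r⁻¹) ^ Γ.s i * |Γ.Wv u t i| := by
      rw [hWy]
      rw [abs_mul, abs_of_pos (Real.rpow_pos_of_pos (inv_pos.2 hr0) _)]
    -- hnorm y = r⁻¹ * hnorm u ≥ r⁻¹ * m
    have hhy : Γ.hnorm y = r⁻¹ * Γ.hnorm u := by
      conv_lhs => rw [hyu]
      exact Γ.hnorm_dil r⁻¹ (inv_pos.2 hr0) u
    have hum_le : m ≤ Γ.hnorm u := hum hus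
    have hrinv_le : r⁻¹ ≤ Γ.hnorm y / m := by
      rw [hhy, le_div_iff₀ hm0]
      exact mul_le_mul_of_nonneg_left hum_le (le_of_lt (inv_pos.2 hr0))
    have hrpow : (r⁻¹) ^ Γ.s i ≤ (Γ.hnorm y / m) ^ Γ.s i :=
      Real.rpow_le_rpow (le_of_lt (inv_pos.2 hr0)) hrinv_le
        (le_trans zero_le_one (Γ.one_le_s i))
    calc |Γ.Wv y t i| = (r⁻¹) ^ Γ.s i * |Γ.Wv u t i| := hWyi
      _ ≤ (Γ.hnorm y / m) ^ Γ.s i * K i := by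
          apply mul_le_mul hrpow (hKle i u hus t ht) (abs_nonneg _)
          exact le_of_lt (Real.rpow_pos_of_pos (div_pos
            (lt_of_lt_of_le (mul_pos (inv_pos.2 hr0) hm0) (by
              rw [hhy]; exact mul_le_mul_of_nonneg_left hum_le
                (le_of_lt (inv_pos.2 hr0)))) hm0) _)
      _ = K i / m ^ Γ.s i * Γ.hnorm y ^ Γ.s i := by
          rw [Real.div_rpow (Γ.hnorm_nonneg y) (le_of_lt hm0)]
          ring

/-- The measure obtained by pushing forward the density `ρ⁺ dt` on `[0,1]` along the
curve `t ↦ δ_t y`. -/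
def Qcur (y : Gc d) (ρ : ℝ → ℝ) : Measure (Gc d) :=
  Measure.map (Γ.Acur y)
    ((volume.restrict (Icc (0:ℝ) 1)).withDensity fun t => ENNReal.ofReal (ρ t))

lemma measurable_Acur_y (y : Gc d) : Measurable (Γ.Acur y) :=
  (Γ.continuous_Acur.comp (Continuous.prodMk_right y)).measurable

lemma Qcur_univ_le (y : Gc d) (ρ : ℝ → ℝ) {c : ℝ}
    (hc : ∀ t ∈ Icc (0:ℝ) 1, ρ t ≤ c) :
    Γ.Qcur y ρ univ ≤ ENNReal.ofReal c := by
  rw [Qcur, Measure.map_apply (Γ.measurable_Acur_y y) MeasurableSet.univ, preimage_univ,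
    withDensity_apply _ MeasurableSet.univ, Measure.restrict_univ]
  calc ∫⁻ t, ENNReal.ofReal (ρ t) ∂(volume.restrict (Icc (0:ℝ) 1))
      ≤ ∫⁻ _ in Icc (0:ℝ) 1, ENNReal.ofReal c ∂volume :=
        setLIntegral_mono measurable_const fun t ht => ENNReal.ofReal_le_ofReal (hc t ht)
    _ = ENNReal.ofReal c * volume (Icc (0:ℝ) 1) := setLIntegral_const _ _
    _ = ENNReal.ofReal c := by
        rw [Real.volume_Icc]
        norm_num

lemma Qcur_support (y : Gc d) (ρ : ℝ → ℝ) :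
    Γ.Qcur y ρ {z | 2 * Γ.hnorm y < Γ.hnorm z} = 0 := by
  have hS : MeasurableSet {z : Gc d | 2 * Γ.hnorm y < Γ.hnorm z} :=
    measurableSet_lt measurable_const Γ.hnorm_cont.measurable
  rw [Qcur, Measure.map_apply (Γ.measurable_Acur_y y) hS,
    withDensity_apply _ ((Γ.measurable_Acur_y y) hS),
    Measure.restrict_restrict ((Γ.measurable_Acur_y y) hS)]
  have hempty : (Γ.Acur y ⁻¹' {z : Gc d | 2 * Γ.hnorm y < Γ.hnorm z}) ∩ Icc (0:ℝ) 1 = ∅ := by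
    ext t
    simp only [mem_inter_iff, mem_preimage, mem_setOf_eq, mem_empty_iff_false, iff_false,
      not_and]
    intro habs ht
    have h1 := Γ.hnorm_Acur_le y ht
    have h2 := Γ.hnorm_nonneg y
    linarith
  rw [hempty]
  simp

lemma Qcur_integral (y : Gc d) (ρ : ℝ → ℝ) (hρ : Continuous ρ)
    (g : Gc d → ℝ) (hg : Continuous g) :
    ∫ z, g z ∂(Γ.Qcur y ρ) =
      ∫ t in Icc (0:ℝ) 1, max (ρ t) 0 * g (Γ.Acur y t) := by
  rw [Qcur, integral_map (Γ.measurable_Acur_y y).aemeasurable hg.aestronglyMeasurable]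
  have hdef : (fun t => ENNReal.ofReal (ρ t)) =
      fun t => (((ρ t).toNNReal : NNReal) : ENNReal) := rfl
  rw [hdef, integral_withDensity_eq_integral_smul (f := fun t => (ρ t).toNNReal)
    (measurable_real_toNNReal.comp hρ.measurable) (fun t => g (Γ.Acur y t))]
  simp only [NNReal.smul_def, Real.coe_toNNReal', smul_eq_mul]

lemma continuous_Wv_comp (y : Gc d) (i : Fin d) : Continuous fun t => Γ.Wv y t i :=
  (continuous_apply i).comp (Γ.continuous_Wv.comp (Continuous.prodMk_right y))

lemma max_sub_max_neg (a : ℝ) : max a 0 - max (-a) 0 = a := by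
  rcases le_total 0 a with h | h
  · rw [max_eq_left h, max_eq_right (neg_nonpos.2 h), sub_zero]
  · rw [max_eq_right h, max_eq_left (neg_nonneg.2 h)]
    ring

end HLG
end HomLie

namespace HomLie
open HLG

/-- **Mean value theorem on homogeneous Lie groups.** There is `β > 0` (depending only on
the group) and, for each `i` and each `y`, a finite signed measure
`Q^{e_i}(y,·) = Qp i y - Qm i y` supported in `B_{β|y|}(e)` with total variation
`≲ |y|^{𝔰_i}` uniformly in `y`, such that for every smooth `f` and all `x`, `y`:
`f(xy) − f(x) = Σ_{i=1}^d ∫ (X_i f)(xz) Q^{e_i}(y,dz)`. -/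
theorem mean_value_theorem (d : ℕ) (Γ : HLG d) :
    ∃ β : ℝ, 0 < β ∧
    ∃ Qp Qm : Fin d → Gc d → MeasureTheory.Measure (Gc d), ∃ C : Fin d → ℝ,
      (∀ i y, MeasureTheory.IsFiniteMeasure (Qp i y) ∧ MeasureTheory.IsFiniteMeasure (Qm i y)) ∧
      (∀ i y, Qp i y {z | β * Γ.hnorm y < Γ.hnorm z} = 0 ∧
              Qm i y {z | β * Γ.hnorm y < Γ.hnorm z} = 0) ∧
      (∀ i y, Qp i y Set.univ + Qm i y Set.univ ≤
        ENNReal.ofReal (C i * Γ.hnorm y ^ Γ.s i)) ∧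
      (∀ f : Gc d → ℝ, ContDiff ℝ (⊤ : ℕ∞) f → ∀ x y : Gc d,
        f (Γ.mul x y) - f x =
          ∑ i : Fin d,
            ((∫ z, Γ.X i f (Γ.mul x z) ∂(Qp i y)) -
              ∫ z, Γ.X i f (Γ.mul x z) ∂(Qm i y))) := by
  obtain ⟨C, hC0, hC⟩ := Γ.exists_bound
  have hb0 : ∀ (i : Fin d) (y : Gc d), 0 ≤ C i * Γ.hnorm y ^ Γ.s i := fun i y =>
    mul_nonneg (hC0 i) (Real.rpow_nonneg (Γ.hnorm_nonneg y) _)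
  have hlep : ∀ (i : Fin d) (y : Gc d),
      Γ.Qcur y (fun t => Γ.Wv y t i) Set.univ ≤
        ENNReal.ofReal (C i * Γ.hnorm y ^ Γ.s i) := fun i y =>
    Γ.Qcur_univ_le y _ fun t ht => le_trans (le_abs_self _) (hC i y t ht)
  have hlem : ∀ (i : Fin d) (y : Gc d),
      Γ.Qcur y (fun t => -Γ.Wv y t i) Set.univ ≤
        ENNReal.ofReal (C i * Γ.hnorm y ^ Γ.s i) := fun i y =>
    Γ.Qcur_univ_le y _ fun t ht => le_trans (neg_le_abs _) (hC i y t ht)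
  refine ⟨2, two_pos,
    (fun i y => Γ.Qcur y fun t => Γ.Wv y t i),
    (fun i y => Γ.Qcur y fun t => -Γ.Wv y t i),
    (fun i => 2 * C i), ?_, ?_, ?_, ?_⟩
  · intro i y
    constructor
    · exact ⟨lt_of_le_of_lt (hlep i y) ENNReal.ofReal_lt_top⟩
    · exact ⟨lt_of_le_of_lt (hlem i y) ENNReal.ofReal_lt_top⟩
  · intro i y
    exact ⟨Γ.Qcur_support y _, Γ.Qcur_support y _⟩
  · intro i y
    calc Γ.Qcur y (fun t => Γ.Wv y t i) Set.univ +
          Γ.Qcur y (fun t => -Γ.Wv y t i) Set.univ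
        ≤ ENNReal.ofReal (C i * Γ.hnorm y ^ Γ.s i) +
          ENNReal.ofReal (C i * Γ.hnorm y ^ Γ.s i) := add_le_add (hlep i y) (hlem i y)
      _ = ENNReal.ofReal (C i * Γ.hnorm y ^ Γ.s i + C i * Γ.hnorm y ^ Γ.s i) :=
          (ENNReal.ofReal_add (hb0 i y) (hb0 i y)).symm
      _ = ENNReal.ofReal (2 * C i * Γ.hnorm y ^ Γ.s i) := by ring_nf
  · intro f hf x y
    have hg : ∀ i : Fin d, Continuous fun z => Γ.X i f (Γ.mul x z) := fun i =>
      (Γ.continuous_X f hf i).comp (Γ.smooth_mul.continuous.comp (Continuous.prodMk_right x))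
    have hAc : Continuous (Γ.Acur y) := Γ.continuous_Acur.comp (Continuous.prodMk_right y)
    have hFc : ∀ i : Fin d,
        Continuous fun t => Γ.Wv y t i * Γ.X i f (Γ.mul x (Γ.Acur y t)) := fun i =>
      (Γ.continuous_Wv_comp y i).mul ((hg i).comp hAc)
    have hstep : ∀ i : Fin d,
        (∫ z, Γ.X i f (Γ.mul x z) ∂(Γ.Qcur y fun t => Γ.Wv y t i)) -
          (∫ z, Γ.X i f (Γ.mul x z) ∂(Γ.Qcur y fun t => -Γ.Wv y t i)) =
          ∫ t in Icc (0:ℝ) 1, Γ.Wv y t i * Γ.X i f (Γ.mul x (Γ.Acur y t)) := by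
      intro i
      rw [Γ.Qcur_integral y _ (Γ.continuous_Wv_comp y i) _ (hg i),
        Γ.Qcur_integral y (fun t => -Γ.Wv y t i) (Γ.continuous_Wv_comp y i).neg _ (hg i)]
      have hint1 : MeasureTheory.IntegrableOn
          (fun t => (Γ.Wv y t i ⊔ 0) * Γ.X i f (Γ.mul x (Γ.Acur y t)))
          (Icc (0:ℝ) 1) MeasureTheory.volume :=
        (((Γ.continuous_Wv_comp y i).max continuous_const).mul
          ((hg i).comp hAc)).integrableOn_Icc
      have hint2 : MeasureTheory.IntegrableOn
          (fun t => (-Γ.Wv y t i ⊔ 0) * Γ.X i f (Γ.mul x (Γ.Acur y t)))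
          (Icc (0:ℝ) 1) MeasureTheory.volume :=
        (((Γ.continuous_Wv_comp y i).neg.max continuous_const).mul
          ((hg i).comp hAc)).integrableOn_Icc
      rw [← MeasureTheory.integral_sub hint1 hint2]
      congr 1
      funext t
      rw [← sub_mul, max_sub_max_neg]
    rw [Finset.sum_congr rfl fun i _ => hstep i]
    rw [← MeasureTheory.integral_finset_sum _ fun i _ => (hFc i).integrableOn_Icc]
    rw [MeasureTheory.integral_Icc_eq_integral_Ioc,
      ← intervalIntegral.integral_of_le zero_le_one]
    rw [intervalIntegral.integral_eq_sub_of_hasDerivAt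
      (f := fun u => f (Γ.mul x (Γ.Acur y u)))
      (fun t _ => Γ.hasDerivAt_main f hf x y t)
      ((continuous_finset_sum _ fun i _ => hFc i).intervalIntegrable 0 1)]
    rw [Γ.Acur_one, Γ.Acur_zero, Γ.mul_one']

end HomLie
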